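/- Let (G,·,∘) be a finite skew brace. Then the number of group operations ·' on G such that (G,·',∘) is a skew brace isomorphic as a skew brace to (G,·,∘) equals |Aut(G,∘)| / |Aut(G,·,∘)|; equivalently, this number multiplied by |Aut(G,·,∘)| equals |Aut(G,∘)|. -/

import Mathlib

def IsSkewBrace {G : Type*} (dot circ : Group G) : Prop :=
  ∀ σ τ κ : G,
    circ.mul σ (dot.mul τ κ) =
      dot.mul (dot.mul (circ.mul σ τ) (dot.inv σ)) (circ.mul σ κ)

def gammaFun {G : Type*} (dot circ : Group G) (σ τ : G) : G :=
  dot.mul (dot.inv σ) (circ.mul σ τ)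

def IsSubgroupOf {G : Type*} (S : Group G) (H : Set G) : Prop :=
  S.one ∈ H ∧ (∀ a ∈ H, ∀ b ∈ H, S.mul a b ∈ H) ∧ (∀ a ∈ H, S.inv a ∈ H)

def IsLeftIdeal {G : Type*} (dot circ : Group G) (H : Set G) : Prop :=
  IsSubgroupOf dot H ∧ ∀ σ : G, ∀ τ ∈ H, gammaFun dot circ σ τ ∈ H

def IsStrongLeftIdeal {G : Type*} (dot circ : Group G) (H : Set G) : Prop :=
  IsLeftIdeal dot circ H ∧
    ∀ σ : G, ∀ τ ∈ H, dot.mul (dot.mul σ τ) (dot.inv σ) ∈ H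

def IsCharacteristicSubgroupOf {G : Type*} (S : Group G) (H : Set G) : Prop :=
  IsSubgroupOf S H ∧
    ∀ f : G ≃ G, (∀ a b : G, f (S.mul a b) = S.mul (f a) (f b)) → ∀ a ∈ H, f a ∈ H

def oppGroup {G : Type*} (dot : Group G) : Group G :=
  letI := dot
  { mul := fun a b => b * a
    one := (1 : G)
    inv := fun a => a⁻¹
    div := fun a b => b⁻¹ * a
    div_eq_mul_inv := fun _ _ => rfl
    mul_assoc := fun a b c => (mul_assoc c b a).symm
    one_mul := fun a => mul_one a
    mul_one := fun a => one_mul a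
    inv_mul_cancel := fun a => mul_inv_cancel a
    npow := fun n x => @npowRec G ⟨(1 : G)⟩ ⟨fun a b => b * a⟩ n x
    zpow := fun n x => @zpowRec G ⟨(1 : G)⟩ ⟨fun a b => b * a⟩ ⟨fun a => a⁻¹⟩
      (@npowRec G ⟨(1 : G)⟩ ⟨fun a b => b * a⟩) n x
    npow_zero := fun _ => rfl
    npow_succ := fun _ _ => rfl
    zpow_zero' := fun _ => rfl
    zpow_succ' := fun _ _ => rfl
    zpow_neg' := fun _ _ => rfl }

def lam {G : Type*} (S : Group G) (σ : G) : Equiv.Perm G :=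
  letI := S; Equiv.mulLeft σ

def rho {G : Type*} (S : Group G) (σ : G) : Equiv.Perm G :=
  letI := S; Equiv.mulRight σ⁻¹

/-! Transport of structure makes `Equiv.Perm G` act on the group structures of `G`, and
`Aut(G,∘)` is the stabilizer of `∘`. The skew brace condition is transported too, so the orbit
of `·` under `Aut(G,∘)` consists exactly of the operations `·'` with `(G,·',∘) ≅ (G,·,∘)`, while
the stabilizer of `·` is `Aut(G,·,∘)`; the orbit–stabilizer theorem gives the count. -/

namespace Equiv.Perm

variable {G : Type*}

instance : MulAction (Equiv.Perm G) (Group G) where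
  smul σ dot := letI := dot; σ.symm.group
  one_smul _ := Group.ext rfl
  mul_smul _ _ _ := Group.ext rfl

theorem smul_group_mul (σ : Equiv.Perm G) (dot : Group G) (a b : G) :
    (σ • dot).mul a b = σ (dot.mul (σ.symm a) (σ.symm b)) := rfl

theorem smul_group_inv (σ : Equiv.Perm G) (dot : Group G) (a : G) :
    (σ • dot).inv a = σ (dot.inv (σ.symm a)) := rfl

theorem smul_group_eq_iff {σ : Equiv.Perm G} {dot dot' : Group G} :
    σ • dot = dot' ↔ ∀ a b, σ (dot.mul a b) = dot'.mul (σ a) (σ b) := by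
  constructor
  · rintro rfl a b
    simp only [smul_group_mul, symm_apply_apply]
  · intro hσ
    refine Group.ext (funext fun a => funext fun b => ?_)
    change σ (dot.mul (σ.symm a) (σ.symm b)) = dot'.mul a b
    rw [hσ, apply_symm_apply, apply_symm_apply]

end Equiv.Perm

theorem IsSkewBrace.perm_smul {G : Type*} {dot circ : Group G} (h : IsSkewBrace dot circ)
    (σ : Equiv.Perm G) : IsSkewBrace (σ • dot) (σ • circ) := by
  intro a b c
  simp only [Equiv.Perm.smul_group_mul, Equiv.Perm.smul_group_inv, Equiv.symm_apply_apply]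
  exact congrArg σ (h _ _ _)

namespace MulAction

variable {M α : Type*} [Group M] [MulAction M α]

theorem mem_orbit_stabilizer_iff {a a' b : α} :
    a' ∈ orbit (stabilizer M b) a ↔ ∃ m : M, m • b = b ∧ m • a = a' :=
  ⟨fun ⟨m, hm⟩ => ⟨m, m.2, hm⟩, fun ⟨m, hb, ha⟩ => ⟨⟨m, hb⟩, ha⟩⟩

def stabilizerStabilizerEquiv (a b : α) :
    stabilizer (stabilizer M b) a ≃ {m : M // m • a = a ∧ m • b = b} where
  toFun m := ⟨m.1.1, m.2, m.1.2⟩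
  invFun m := ⟨⟨m.1, m.2.2⟩, m.2.1⟩
  left_inv _ := rfl
  right_inv _ := rfl

end MulAction

open MulAction Equiv.Perm in
theorem IsSkewBrace.mem_orbit_iff {G : Type*} {dot circ : Group G} (h : IsSkewBrace dot circ)
    (dot' : Group G) :
    dot' ∈ orbit (stabilizer (Equiv.Perm G) circ) dot ↔ IsSkewBrace dot' circ ∧
      ∃ f : G ≃ G, (∀ a b : G, f (dot'.mul a b) = dot.mul (f a) (f b)) ∧
        (∀ a b : G, f (circ.mul a b) = circ.mul (f a) (f b)) := by
  rw [mem_orbit_stabilizer_iff]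
  constructor
  · rintro ⟨σ, hcirc, rfl⟩
    exact ⟨hcirc ▸ h.perm_smul σ, σ⁻¹, smul_group_eq_iff.1 (inv_smul_smul σ dot),
      smul_group_eq_iff.1 (inv_smul_eq_iff.2 hcirc.symm)⟩
  · rintro ⟨-, f, hdot, hcirc⟩
    refine ⟨f⁻¹, ?_, ?_⟩ <;> rw [inv_smul_eq_iff, eq_comm, smul_group_eq_iff] <;> assumption

theorem stmt3_general {G : Type*} (dot circ : Group G) (h : IsSkewBrace dot circ) :
    Nat.card {dot' : Group G // IsSkewBrace dot' circ ∧
        ∃ f : G ≃ G, (∀ a b : G, f (dot'.mul a b) = dot.mul (f a) (f b)) ∧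
          (∀ a b : G, f (circ.mul a b) = circ.mul (f a) (f b))} *
      Nat.card {f : G ≃ G // (∀ a b : G, f (dot.mul a b) = dot.mul (f a) (f b)) ∧
          (∀ a b : G, f (circ.mul a b) = circ.mul (f a) (f b))} =
    Nat.card {f : G ≃ G // ∀ a b : G, f (circ.mul a b) = circ.mul (f a) (f b)} := by
  let autCirc := MulAction.stabilizer (Equiv.Perm G) circ
  have horbit := Equiv.subtypeEquivRight fun dot' => (h.mem_orbit_iff dot').symm
  have hstab : {f : G ≃ G // (∀ a b : G, f (dot.mul a b) = dot.mul (f a) (f b)) ∧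
        (∀ a b : G, f (circ.mul a b) = circ.mul (f a) (f b))} ≃
      MulAction.stabilizer autCirc dot :=
    (Equiv.subtypeEquivRight fun _ => by simp only [Equiv.Perm.smul_group_eq_iff]).trans
      (MulAction.stabilizerStabilizerEquiv dot circ).symm
  have haut : {f : G ≃ G // ∀ a b : G, f (circ.mul a b) = circ.mul (f a) (f b)} ≃ autCirc :=
    Equiv.subtypeEquivRight fun _ => Equiv.Perm.smul_group_eq_iff.symm
  rw [Nat.card_congr horbit, Nat.card_congr hstab, Nat.card_congr haut, ← Nat.card_prod]
  exact Nat.card_congr (MulAction.orbitProdStabilizerEquivGroup autCirc dot)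

/-- For a finite skew brace `(G,·,∘)`, the number of group operations
`·'` on `G` such that `(G,·',∘)` is a skew brace isomorphic to `(G,·,∘)`, multiplied
by `|Aut(G,·,∘)|`, equals `|Aut(G,∘)|`. -/
theorem stmt3 {G : Type*} [Finite G] (dot circ : Group G) (h : IsSkewBrace dot circ) :
    Nat.card {dot' : Group G // IsSkewBrace dot' circ ∧
        ∃ f : G ≃ G, (∀ a b : G, f (dot'.mul a b) = dot.mul (f a) (f b)) ∧
          (∀ a b : G, f (circ.mul a b) = circ.mul (f a) (f b))} *
      Nat.card {f : G ≃ G // (∀ a b : G, f (dot.mul a b) = dot.mul (f a) (f b)) ∧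
          (∀ a b : G, f (circ.mul a b) = circ.mul (f a) (f b))} =
    Nat.card {f : G ≃ G // ∀ a b : G, f (circ.mul a b) = circ.mul (f a) (f b)} :=
  stmt3_general dot circ h
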